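/- Let T = −Id ∈ GL(2,ℝ) and let a ∈ ℝ² with 0 < ‖a‖ < 1. Then the map T̄ₐ(x) = (a−x)/‖a−x‖ on S¹ has exactly four periodic points of order dividing 2: namely ā = a/‖a‖, −ā, and the two points x₀ ∈ S¹ satisfying ‖a − x₀‖ = 1. -/

import Mathlib

/-!
Write `f x = (a - x) / ‖a - x‖`. If `y = f x` and `f y = x`, then
`a = x + ‖a - x‖ • y = y + ‖a - y‖ • x`, so `(1 - ‖a - y‖) • x = (1 - ‖a - x‖) • y`.
Unless `‖a - x‖ = 1`, the unit vectors `x` and `y` are therefore equal up to sign; `y = x` would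
give `‖a‖ = 1 + ‖a - x‖ > 1`, and `y = -x` makes `a` a multiple of `x`, i.e. `x = ±a/‖a‖`.
The unit vectors with `‖a - x‖ = 1` are the two intersection points `a/2 ± t w` of the unit
circles about `0` and `a`, where `w` is a unit normal to `a` and `t² = 1 - ‖a‖²/4`.
-/

/-- The "affine" map `x ↦ (a + T(x))/‖a + T(x)‖` induced on the unit sphere. -/
noncomputable def affAct {m : ℕ} (A : Matrix (Fin m) (Fin m) ℝ)
    (a x : EuclideanSpace ℝ (Fin m)) : EuclideanSpace ℝ (Fin m) :=
  ‖a + Matrix.toEuclideanLin A x‖⁻¹ • (a + Matrix.toEuclideanLin A x)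

open Module

section NormedSpace

variable {E : Type*} [NormedAddCommGroup E] [NormedSpace ℝ E]

noncomputable def negAffAct (a x : E) : E :=
  ‖a - x‖⁻¹ • (a - x)

lemma affAct_neg_one {m : ℕ} (a : EuclideanSpace ℝ (Fin m)) :
    affAct (-1) a = negAffAct a := by
  ext1 x
  simp [affAct, negAffAct, sub_eq_add_neg]

lemma norm_negAffAct {a x : E} (h : a ≠ x) : ‖negAffAct a x‖ = 1 :=
  norm_smul_inv_norm (sub_ne_zero.2 h)

lemma norm_sub_smul_negAffAct {a x : E} (h : a ≠ x) : ‖a - x‖ • negAffAct a x = a - x :=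
  smul_inv_smul₀ (norm_ne_zero_iff.2 (sub_ne_zero.2 h)) _

lemma negAffAct_of_norm_sub_eq_one {a x : E} (h : ‖a - x‖ = 1) : negAffAct a x = a - x := by
  simp [negAffAct, h]

lemma norm_sub_inv_norm_smul_self {a : E} (ha : a ≠ 0) (ha1 : ‖a‖ ≤ 1) :
    ‖a - ‖a‖⁻¹ • a‖ = 1 - ‖a‖ := by
  have hpos : 0 < ‖a‖ := norm_pos_iff.2 ha
  have : a - ‖a‖⁻¹ • a = -((‖a‖⁻¹ - 1) • a) := by module
  rw [this, norm_neg, norm_smul, Real.norm_of_nonneg (by linarith [(one_le_inv₀ hpos).2 ha1]),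
    sub_mul, inv_mul_cancel₀ hpos.ne', one_mul]

lemma norm_sub_neg_inv_norm_smul_self {a : E} (ha : a ≠ 0) :
    ‖a - -(‖a‖⁻¹ • a)‖ = 1 + ‖a‖ := by
  have hpos : 0 < ‖a‖ := norm_pos_iff.2 ha
  have : a - -(‖a‖⁻¹ • a) = (‖a‖⁻¹ + 1) • a := by module
  rw [this, norm_smul, Real.norm_of_nonneg (by positivity), add_mul, inv_mul_cancel₀ hpos.ne',
    one_mul]

lemma negAffAct_inv_norm_smul_self {a : E} (ha : a ≠ 0) (ha1 : ‖a‖ < 1) :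
    negAffAct a (‖a‖⁻¹ • a) = -(‖a‖⁻¹ • a) := by
  rw [negAffAct, norm_sub_inv_norm_smul_self ha ha1.le]
  have : 1 - ‖a‖ ≠ 0 := by linarith
  match_scalars
  field_simp
  ring

lemma negAffAct_neg_inv_norm_smul_self {a : E} (ha : a ≠ 0) :
    negAffAct a (-(‖a‖⁻¹ • a)) = ‖a‖⁻¹ • a := by
  rw [negAffAct, norm_sub_neg_inv_norm_smul_self ha]
  have : 1 + ‖a‖ ≠ 0 := by positivity
  match_scalars
  field_simp
  ring

lemma eq_or_eq_neg_of_smul_eq_smul {x y : E} (hx : ‖x‖ = 1) (hy : ‖y‖ = 1) {c d : ℝ}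
    (hd : d ≠ 0) (h : c • x = d • y) : y = x ∨ y = -x := by
  have habs : |c| = |d| := by simpa [norm_smul, hx, hy] using congrArg norm h
  have hyx : y = (c / d) • x := by
    rw [div_eq_inv_mul, mul_smul, h, inv_smul_smul₀ hd]
  have : |c / d| = 1 := by rw [abs_div, habs, div_self (abs_ne_zero.2 hd)]
  rcases abs_eq_abs.1 (this.trans abs_one.symm) with h1 | h1 <;> simp [hyx, h1]

lemma eq_inv_norm_smul_or_eq_neg_of_eq_smul {a x : E} (hx : ‖x‖ = 1) (ha : a ≠ 0) {c : ℝ}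
    (h : a = c • x) : x = ‖a‖⁻¹ • a ∨ x = -(‖a‖⁻¹ • a) := by
  have hc : c ≠ 0 := by rintro rfl; simp_all
  have hnorm : ‖a‖ = |c| := by simp [h, norm_smul, hx]
  rcases lt_or_gt_of_ne hc with hneg | hpos
  · right
    rw [hnorm, abs_of_neg hneg, h, smul_smul, inv_neg, neg_mul, inv_mul_cancel₀ hc, neg_one_smul,
      neg_neg]
  · left
    rw [hnorm, abs_of_pos hpos, h, inv_smul_smul₀ hc]

lemma eq_of_negAffAct_negAffAct_eq_self {a x : E} (ha : a ≠ 0) (ha1 : ‖a‖ < 1) (hx : ‖x‖ = 1)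
    (h : negAffAct a (negAffAct a x) = x) :
    x = ‖a‖⁻¹ • a ∨ x = -(‖a‖⁻¹ • a) ∨ ‖a - x‖ = 1 := by
  have hax : a ≠ x := fun h => ha1.ne (h ▸ hx)
  set y := negAffAct a x
  have hy : ‖y‖ = 1 := norm_negAffAct hax
  have hay : a ≠ y := fun h => ha1.ne (h ▸ hy)
  have hxy : a - x = ‖a - x‖ • y := (norm_sub_smul_negAffAct hax).symm
  have hyx : a - y = ‖a - y‖ • x := by
    have := (norm_sub_smul_negAffAct hay).symm
    rwa [h] at this
  by_cases hr : ‖a - x‖ = 1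
  · exact Or.inr (Or.inr hr)
  have hparallel : (1 - ‖a - y‖) • x = (1 - ‖a - x‖) • y := by
    linear_combination (norm := module) hyx - hxy
  rcases eq_or_eq_neg_of_smul_eq_smul hx hy (sub_ne_zero.2 (Ne.symm hr)) hparallel with
    hyx' | hyx'
  · refine absurd ha1 (not_lt.2 ?_)
    have : a = (1 + ‖a - x‖) • x := by
      rw [hyx'] at hxy
      linear_combination (norm := module) hxy
    rw [this, norm_smul, hx, mul_one, Real.norm_of_nonneg (by positivity)]
    linarith [norm_nonneg (a - x)]
  · refine Or.imp_right Or.inl (eq_inv_norm_smul_or_eq_neg_of_eq_smul hx ha (c := 1 - ‖a - x‖) ?_)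
    rw [hyx'] at hxy
    linear_combination (norm := module) hxy

lemma negAffAct_negAffAct_eq_self_iff {a x : E} (ha : a ≠ 0) (ha1 : ‖a‖ < 1) (hx : ‖x‖ = 1) :
    negAffAct a (negAffAct a x) = x ↔ x = ‖a‖⁻¹ • a ∨ x = -(‖a‖⁻¹ • a) ∨ ‖a - x‖ = 1 := by
  refine ⟨eq_of_negAffAct_negAffAct_eq_self ha ha1 hx, ?_⟩
  rintro (rfl | rfl | h)
  · rw [negAffAct_inv_norm_smul_self ha ha1, negAffAct_neg_inv_norm_smul_self ha]
  · rw [negAffAct_neg_inv_norm_smul_self ha, negAffAct_inv_norm_smul_self ha ha1]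
  · rw [negAffAct_of_norm_sub_eq_one h, negAffAct_of_norm_sub_eq_one (by simpa using hx),
      sub_sub_cancel]

lemma setOf_negAffAct_negAffAct_eq_self {a : E} (ha : a ≠ 0) (ha1 : ‖a‖ < 1) :
    {x : E | ‖x‖ = 1 ∧ negAffAct a (negAffAct a x) = x} =
      {‖a‖⁻¹ • a, -(‖a‖⁻¹ • a)} ∪ {x | ‖x‖ = 1 ∧ ‖a - x‖ = 1} := by
  ext x
  simp only [Set.mem_ofPred_eq, Set.mem_union, Set.mem_insert_iff, Set.mem_singleton_iff]
  constructor
  · rintro ⟨hx, h⟩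
    rcases (negAffAct_negAffAct_eq_self_iff ha ha1 hx).1 h with h | h | h
    exacts [Or.inl (Or.inl h), Or.inl (Or.inr h), Or.inr ⟨hx, h⟩]
  · intro hx
    have hx1 : ‖x‖ = 1 := by
      rcases hx with (rfl | rfl) | ⟨hx1, -⟩
      exacts [norm_smul_inv_norm ha, (norm_neg _).trans (norm_smul_inv_norm ha), hx1]
    exact ⟨hx1, (negAffAct_negAffAct_eq_self_iff ha ha1 hx1).2 (by tauto)⟩

lemma disjoint_pair_setOf_norm_sub_eq_one {a : E} (ha : a ≠ 0) (ha1 : ‖a‖ < 1) :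
    Disjoint ({‖a‖⁻¹ • a, -(‖a‖⁻¹ • a)} : Set E) {x | ‖x‖ = 1 ∧ ‖a - x‖ = 1} := by
  have hpos : 0 < ‖a‖ := norm_pos_iff.2 ha
  rw [Set.disjoint_left]
  rintro x (rfl | rfl) ⟨-, h⟩
  · rw [norm_sub_inv_norm_smul_self ha ha1.le] at h
    linarith
  · rw [norm_sub_neg_inv_norm_smul_self ha] at h
    linarith

end NormedSpace

section InnerProductSpace

variable {E : Type*} [NormedAddCommGroup E] [InnerProductSpace ℝ E]

lemma exists_norm_eq_one_inner_eq_zero (hd : 2 ≤ finrank ℝ E) (a : E) :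
    ∃ w : E, ‖w‖ = 1 ∧ inner ℝ a w = 0 := by
  have : FiniteDimensional ℝ E := Module.finite_of_finrank_pos (by omega)
  have hK := (ℝ ∙ a).finrank_add_finrank_orthogonal
  have h1 : finrank ℝ (ℝ ∙ a) ≤ 1 := by
    simpa using finrank_span_le_card (R := ℝ) ({a} : Set E)
  obtain ⟨w, hw, hw0⟩ := Submodule.exists_mem_ne_zero_of_ne_bot (p := (ℝ ∙ a)ᗮ) (by
    intro h; rw [h, finrank_bot] at hK; omega)
  refine ⟨‖w‖⁻¹ • w, norm_smul_inv_norm hw0, ?_⟩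
  rw [inner_smul_right, Submodule.mem_orthogonal_singleton_iff_inner_right.1 hw, mul_zero]

lemma norm_inv_two_smul_add_smul_sq {a w : E} (hw : ‖w‖ = 1) (haw : inner ℝ a w = 0) (s : ℝ) :
    ‖(2⁻¹ : ℝ) • a + s • w‖ ^ 2 = ‖a‖ ^ 2 / 4 + s ^ 2 := by
  rw [norm_add_sq_real, real_inner_smul_left, real_inner_smul_right, haw, norm_smul, norm_smul,
    hw, mul_one, Real.norm_eq_abs, Real.norm_eq_abs, mul_pow, sq_abs, sq_abs]
  ring

lemma exists_pair_eq_setOf_norm_eq_one_norm_sub_eq_one (hd : finrank ℝ E = 2) {a : E}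
    (ha : a ≠ 0) (ha2 : ‖a‖ < 2) :
    ∃ x₀ y₀ : E, x₀ ≠ y₀ ∧ {x : E | ‖x‖ = 1 ∧ ‖a - x‖ = 1} = {x₀, y₀} := by
  obtain ⟨w, hw, haw⟩ := exists_norm_eq_one_inner_eq_zero hd.ge a
  have hpos : 0 < 1 - ‖a‖ ^ 2 / 4 := by nlinarith [norm_nonneg a]
  set t := √(1 - ‖a‖ ^ 2 / 4)
  have ht : 0 < t := Real.sqrt_pos.2 hpos
  have hnorm : ∀ s : ℝ, s ^ 2 = t ^ 2 → ‖(2⁻¹ : ℝ) • a + s • w‖ = 1 := fun s hs => by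
    rw [← pow_eq_one_iff_of_nonneg (norm_nonneg _) two_ne_zero,
      norm_inv_two_smul_add_smul_sq hw haw, hs, Real.sq_sqrt hpos.le]
    ring
  set x₀ := (2⁻¹ : ℝ) • a + t • w
  set y₀ := (2⁻¹ : ℝ) • a + (-t) • w
  have hx₀ : ‖x₀‖ = 1 := hnorm t rfl
  have hy₀ : ‖y₀‖ = 1 := hnorm (-t) (neg_sq t)
  have hax₀ : a - x₀ = y₀ := by module
  have hay₀ : a - y₀ = x₀ := by module
  have hne : x₀ ≠ y₀ := fun h => by
    have hw0 : w ≠ 0 := by rintro rfl; simp at hw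
    refine smul_ne_zero (by positivity) hw0 (?_ : (2 * t) • w = 0)
    linear_combination (norm := module) h
  refine ⟨x₀, y₀, hne, Set.Subset.antisymm ?_ ?_⟩
  · have : FiniteDimensional ℝ E := Module.finite_of_finrank_eq_succ hd
    rintro x ⟨hx, hax⟩
    have hdist : ∀ p : E, ‖p‖ = 1 → ‖a - p‖ = 1 → dist p 0 = 1 ∧ dist p a = 1 := by
      intro p hp hap
      rw [dist_zero_right, dist_comm, dist_eq_norm]
      exact ⟨hp, hap⟩
    obtain ⟨hx₀0, hx₀a⟩ := hdist x₀ hx₀ (hax₀ ▸ hy₀)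
    obtain ⟨hy₀0, hy₀a⟩ := hdist y₀ hy₀ (hay₀ ▸ hx₀)
    obtain ⟨hx0, hxa⟩ := hdist x hx hax
    exact EuclideanGeometry.eq_of_dist_eq_of_dist_eq_of_finrank_eq_two hd ha.symm hne
      hx₀0 hy₀0 hx0 hx₀a hy₀a hxa
  · rintro x (rfl | rfl)
    exacts [⟨hx₀, hax₀ ▸ hy₀⟩, ⟨hy₀, hay₀ ▸ hx₀⟩]

end InnerProductSpace

theorem stmt19 (a : EuclideanSpace ℝ (Fin 2)) (ha0 : 0 < ‖a‖) (ha1 : ‖a‖ < 1) :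
    ∃ x₀ y₀ : EuclideanSpace ℝ (Fin 2), x₀ ≠ y₀ ∧
      {x : EuclideanSpace ℝ (Fin 2) | ‖x‖ = 1 ∧ ‖a - x‖ = 1} = {x₀, y₀} ∧
      {x : EuclideanSpace ℝ (Fin 2) | ‖x‖ = 1 ∧
          affAct (-1 : Matrix (Fin 2) (Fin 2) ℝ) a
            (affAct (-1 : Matrix (Fin 2) (Fin 2) ℝ) a x) = x} =
        {‖a‖⁻¹ • a, -(‖a‖⁻¹ • a), x₀, y₀} ∧
      ({‖a‖⁻¹ • a, -(‖a‖⁻¹ • a), x₀, y₀} : Set (EuclideanSpace ℝ (Fin 2))).ncard = 4 := by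
  have ha : a ≠ 0 := norm_pos_iff.1 ha0
  obtain ⟨x₀, y₀, hne, hcircle⟩ :=
    exists_pair_eq_setOf_norm_eq_one_norm_sub_eq_one finrank_euclideanSpace_fin ha (by linarith)
  have hunion : ({‖a‖⁻¹ • a, -(‖a‖⁻¹ • a), x₀, y₀} : Set (EuclideanSpace ℝ (Fin 2))) =
      {‖a‖⁻¹ • a, -(‖a‖⁻¹ • a)} ∪ {x₀, y₀} := by
    rw [Set.insert_union, Set.singleton_union]
  refine ⟨x₀, y₀, hne, hcircle, ?_, ?_⟩
  · rw [affAct_neg_one, setOf_negAffAct_negAffAct_eq_self ha ha1, hcircle, hunion]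
  · have hdisj := disjoint_pair_setOf_norm_sub_eq_one ha ha1
    rw [hcircle] at hdisj
    have hpm : ‖a‖⁻¹ • a ≠ -(‖a‖⁻¹ • a) := by
      rw [Ne, eq_neg_iff_add_eq_zero, ← two_smul ℝ]
      simp [ha]
    rw [hunion, Set.ncard_union_eq hdisj, Set.ncard_pair hpm, Set.ncard_pair hne]
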